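/- arXiv:math/0005224 — 2 statements merged into one kernel-verified Lean document; each statement's English description precedes it below -/
import Mathlib

section
/- Let (S, ∂_S, *) be a pointed dg-manifold, i.e. the homological vector field ∂_S vanishes at * to second order (∂_S I_* ⊆ I_*²). Then the operation on the parity-reversed tangent space ΠT_{S,*} given by [Πv₁, Πv₂]_* := Π([V₁, [∂_S, V₂]]|_*), where V_i are arbitrary vector field extensions of the tangent vectors v_i, is well-defined (independent of the extensions) and endows ΠT_{S,*} with a Lie superalgebra structure; in particular it satisfies the graded Jacobi identity, which follows from [∂_S, ∂_S] = 0. -/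
/-!
Write `D = [∂_S, -]`. Since `∂_S` is odd, `[∂_S, ∂_S] = 0` gives `2 D² = 0`, so `D² = 0`.
Because `∂_S ∈ F 2`, `D` maps everything into `F 1`, so modulo `F 1` every term of the form
`D(…)` vanishes, and `[F 1, F 1] ⊆ F 1`. Expanding `[V₁, D V₂]` by the Jacobi identity shows
that graded antisymmetry of the derived bracket fails exactly by `± D[V₁, V₂]`, and, using
`D² = 0`, that its Jacobi identity fails by `± (D(…) - [D[V₁, V₂], D V₃])`; both defects lie
in `F 1`.
-/

section GradedBracket

variable {k V : Type*} [Field k] [AddCommGroup V] [Module k V]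

def GradedAntisymm (Gr : ZMod 2 → Submodule k V) (b : V →ₗ[k] V →ₗ[k] V) : Prop :=
  ∀ (i j : ZMod 2) (x y : V), x ∈ Gr i → y ∈ Gr j →
    b x y = -(((-1 : k) ^ ((i * j).val)) • b y x)

def GradedJacobi (Gr : ZMod 2 → Submodule k V) (b : V →ₗ[k] V →ₗ[k] V) : Prop :=
  ∀ (i j : ZMod 2) (x y z : V), x ∈ Gr i → y ∈ Gr j →
    b x (b y z) = b (b x y) z + ((-1 : k) ^ ((i * j).val)) • b y (b x z)

theorem neg_one_pow_val_add_one_mul_add_one {R : Type*} [Ring R] (i j : ZMod 2) :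
    (-1 : R) ^ ((i + 1) * (j + 1)).val = -((-1) ^ i.val * (-1) ^ ((1 + i) * j).val) := by
  have h01 : ∀ x : ZMod 2, x = 0 ∨ x = 1 := by decide
  rcases h01 i with rfl | rfl <;> rcases h01 j with rfl | rfl <;>
    norm_num [show (2 : ZMod 2).val = 0 from rfl, show (4 : ZMod 2).val = 0 from rfl,
      ZMod.val_one]

variable {Gr : ZMod 2 → Submodule k V} {b : V →ₗ[k] V →ₗ[k] V} {d : V}

theorem GradedJacobi.bracket_bracket_eq_zero [NeZero (2 : k)] (hjac : GradedJacobi Gr b)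
    (hd : d ∈ Gr 1) (hdd : b d d = 0) (z : V) : b d (b d z) = 0 := by
  have h := hjac 1 1 d d z hd hd
  rw [hdd] at h
  simp only [map_zero, LinearMap.zero_apply, zero_add,
    show ((1 * 1 : ZMod 2)).val = 1 from rfl, pow_one, neg_one_smul] at h
  have h2 : (2 : k) • b d (b d z) = 0 := by
    rw [two_smul]
    nth_rewrite 1 [h]
    exact neg_add_cancel _
  exact (smul_eq_zero.mp h2).resolve_left two_ne_zero

theorem GradedJacobi.bracket_left_odd {x : V} {i : ZMod 2} (hjac : GradedJacobi Gr b)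
    (hx : x ∈ Gr i) (hd : d ∈ Gr 1) (y : V) :
    b x (b d y) = b (b x d) y + (-1 : k) ^ i.val • b d (b x y) := by
  simpa only [mul_one] using hjac i 1 x d y hx hd

theorem GradedAntisymm.bracket_odd {x : V} {i : ZMod 2} (hanti : GradedAntisymm Gr b)
    (hx : x ∈ Gr i) (hd : d ∈ Gr 1) : b x d = -((-1 : k) ^ i.val • b d x) := by
  simpa only [mul_one] using hanti i 1 x d hx hd

theorem derived_bracket_antisymm {x y : V} {i j : ZMod 2}
    (hgr : ∀ (i j : ZMod 2) (x y : V), x ∈ Gr i → y ∈ Gr j → b x y ∈ Gr (i + j))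
    (hanti : GradedAntisymm Gr b) (hjac : GradedJacobi Gr b)
    (hd : d ∈ Gr 1) (hx : x ∈ Gr i) (hy : y ∈ Gr j) :
    b x (b d y) + (-1 : k) ^ ((i + 1) * (j + 1)).val • b y (b d x)
      = (-1 : k) ^ i.val • b d (b x y) := by
  have hdx_y : b (b d x) y = -((-1 : k) ^ ((1 + i) * j).val • b y (b d x)) :=
    hanti (1 + i) j _ y (hgr 1 i d x hd hx) hy
  rw [hjac.bracket_left_odd hx hd, hanti.bracket_odd hx hd,
    neg_one_pow_val_add_one_mul_add_one]
  simp only [map_neg, map_smul, LinearMap.neg_apply, LinearMap.smul_apply, hdx_y]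
  module

theorem derived_bracket_jacobi {x y z : V} {i j : ZMod 2}
    (hgr : ∀ (i j : ZMod 2) (x y : V), x ∈ Gr i → y ∈ Gr j → b x y ∈ Gr (i + j))
    (hanti : GradedAntisymm Gr b) (hjac : GradedJacobi Gr b)
    (hd : d ∈ Gr 1) (hdd : ∀ w, b d (b d w) = 0) (hx : x ∈ Gr i) (hy : y ∈ Gr j) :
    b x (b d (b y (b d z))) - b (b x (b d y)) (b d z)
        - (-1 : k) ^ ((i + 1) * (j + 1)).val • b y (b d (b x (b d z)))
      = (-1 : k) ^ i.val • (b d (b x (b y (b d z))) - b (b d (b x y)) (b d z)) := by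
  have hdx : b d x ∈ Gr (1 + i) := hgr 1 i d x hd hx
  have hdx_dz : b (b d x) (b d z) = b d (b x (b d z)) := by
    simpa [hdd z] using (hjac 1 i d x (b d z) hd hx).symm
  rw [hjac.bracket_left_odd hx hd, hjac.bracket_left_odd hx hd, hanti.bracket_odd hx hd,
    neg_one_pow_val_add_one_mul_add_one]
  simp only [map_neg, map_smul, map_add, LinearMap.neg_apply, LinearMap.smul_apply,
    LinearMap.add_apply]
  rw [hjac (1 + i) j _ y _ hdx hy, hdx_dz]
  module

end GradedBracket

section Filtration

variable {k V : Type*} [Field k] [AddCommGroup V] [Module k V]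
  {b : V →ₗ[k] V →ₗ[k] V} {F : ℕ → Submodule k V} {d : V}

theorem bracket_mem_one_of_mem_two (hF0 : F 0 = ⊤)
    (hFb : ∀ (i j : ℕ) (x y : V), x ∈ F i → y ∈ F j → b x y ∈ F (i + j - 1))
    (hd : d ∈ F 2) (w : V) : b d w ∈ F 1 :=
  hFb 2 0 d w hd (hF0 ▸ Submodule.mem_top)

theorem derived_bracket_sub_mem_one (hF0 : F 0 = ⊤)
    (hFb : ∀ (i j : ℕ) (x y : V), x ∈ F i → y ∈ F j → b x y ∈ F (i + j - 1))
    (hd : d ∈ F 2) {x₁ x₂ y₁ y₂ : V} (hx : y₁ - x₁ ∈ F 1) (hy : y₂ - x₂ ∈ F 1) :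
    b y₁ (b d y₂) - b x₁ (b d x₂) ∈ F 1 := by
  have hsplit : b y₁ (b d y₂) - b x₁ (b d x₂)
      = b (y₁ - x₁) (b d y₂) + b x₁ (b d (y₂ - x₂)) := by
    simp only [map_sub, LinearMap.sub_apply]
    abel
  rw [hsplit]
  exact add_mem (hFb 1 1 _ _ hx (bracket_mem_one_of_mem_two hF0 hFb hd y₂))
    (hFb 0 2 _ _ (hF0 ▸ Submodule.mem_top) (hFb 2 1 d _ hd hy))

end Filtration

theorem stmt4_general
    (k : Type*) [Field k] [CharZero k]
    (V : Type*) [AddCommGroup V] [Module k V]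
    -- Lie superalgebra structure on the space of vector fields
    (Gr : ZMod 2 → Submodule k V)
    (b : V →ₗ[k] V →ₗ[k] V)
    (hb_gr : ∀ (i j : ZMod 2) (x y : V), x ∈ Gr i → y ∈ Gr j → b x y ∈ Gr (i + j))
    (hanti : ∀ (i j : ZMod 2) (x y : V), x ∈ Gr i → y ∈ Gr j →
      b x y = -(((-1 : k) ^ ((i * j).val)) • b y x))
    (hjac : ∀ (i j : ZMod 2) (x y z : V), x ∈ Gr i → y ∈ Gr j →
      b x (b y z) = b (b x y) z + ((-1 : k) ^ ((i * j).val)) • b y (b x z))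
    -- filtration by order of vanishing at the point *
    (F : ℕ → Submodule k V)
    (hF0 : F 0 = ⊤)
    (hFb : ∀ (i j : ℕ) (x y : V), x ∈ F i → y ∈ F j → b x y ∈ F (i + j - 1))
    -- the homological vector field, odd, vanishing to second order at *
    (dS : V) (hdS_odd : dS ∈ Gr 1) (hdS2 : dS ∈ F 2) (hdSdS : b dS dS = 0) :
    -- (1) well-definedness: the value of [V₁,[∂_S,V₂]] at * (i.e. mod F 1) depends
    -- only on the values of V₁, V₂ at * (i.e. on their classes mod F 1)
    (∀ V₁ V₂ W₁ W₂ : V, W₁ - V₁ ∈ F 1 → W₂ - V₂ ∈ F 1 →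
      b W₁ (b dS W₂) - b V₁ (b dS V₂) ∈ F 1) ∧
    -- (2) graded antisymmetry at * for the shifted (Π-reversed) parities
    (∀ (i j : ZMod 2) (V₁ V₂ : V), V₁ ∈ Gr i → V₂ ∈ Gr j →
      b V₁ (b dS V₂) + ((-1 : k) ^ (((i + 1) * (j + 1)).val)) • b V₂ (b dS V₁) ∈ F 1) ∧
    -- (3) graded Jacobi identity at *, a consequence of [∂_S,∂_S] = 0
    (∀ (i j : ZMod 2) (V₁ V₂ V₃ : V), V₁ ∈ Gr i → V₂ ∈ Gr j →
      b V₁ (b dS (b V₂ (b dS V₃)))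
        - b (b V₁ (b dS V₂)) (b dS V₃)
        - ((-1 : k) ^ (((i + 1) * (j + 1)).val)) • b V₂ (b dS (b V₁ (b dS V₃)))
        ∈ F 1) := by
  have hD : ∀ w, b dS w ∈ F 1 := bracket_mem_one_of_mem_two hF0 hFb hdS2
  have hD2 : ∀ w, b dS (b dS w) = 0 :=
    GradedJacobi.bracket_bracket_eq_zero hjac hdS_odd hdSdS
  refine ⟨fun V₁ V₂ W₁ W₂ h₁ h₂ => derived_bracket_sub_mem_one hF0 hFb hdS2 h₁ h₂,
    fun i j V₁ V₂ h₁ h₂ => ?_, fun i j V₁ V₂ V₃ h₁ h₂ => ?_⟩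
  · rw [derived_bracket_antisymm hb_gr hanti hjac hdS_odd h₁ h₂]
    exact Submodule.smul_mem _ _ (hD _)
  · rw [derived_bracket_jacobi hb_gr hanti hjac hdS_odd hD2 h₁ h₂]
    exact Submodule.smul_mem _ _ (sub_mem (hD _) (hFb 1 1 _ _ (hD _) (hD _)))

/-- for a pointed dg-manifold `(S, ∂_S, *)` the operation
`[Πv₁, Πv₂]_* := Π([V₁,[∂_S,V₂]]|_*)` on the parity-reversed tangent space at `*` is
well defined (independent of the chosen vector-field extensions `V_i` of `v_i`) and
satisfies the (graded) antisymmetry and Jacobi identities, the latter as a consequence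
of `[∂_S,∂_S] = 0`; hence it makes `ΠT_{S,*}` a Lie superalgebra.

Algebraic model: the Lie superalgebra `V` of vector fields on `S` carries the
order-of-vanishing filtration `F 0 ⊇ F 1 ⊇ F 2 ⊇ ⋯` at `*` (with `F 0 = ⊤`,
`[F i, F j] ⊆ F (i+j-1)`), the tangent space at `*` is `V/F 1` (evaluation at `*`
kills exactly `F 1`), and the pointedness condition `∂_S I_* ⊆ I_*²` says `∂_S ∈ F 2`. -/
theorem stmt4
    (k : Type*) [Field k] [CharZero k]
    (V : Type*) [AddCommGroup V] [Module k V]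
    -- Lie superalgebra structure on the space of vector fields
    (Gr : ZMod 2 → Submodule k V)
    (b : V →ₗ[k] V →ₗ[k] V)
    (hb_gr : ∀ (i j : ZMod 2) (x y : V), x ∈ Gr i → y ∈ Gr j → b x y ∈ Gr (i + j))
    (hanti : ∀ (i j : ZMod 2) (x y : V), x ∈ Gr i → y ∈ Gr j →
      b x y = -(((-1 : k) ^ ((i * j).val)) • b y x))
    (hjac : ∀ (i j : ZMod 2) (x y z : V), x ∈ Gr i → y ∈ Gr j →
      b x (b y z) = b (b x y) z + ((-1 : k) ^ ((i * j).val)) • b y (b x z))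
    -- filtration by order of vanishing at the point *
    (F : ℕ → Submodule k V)
    (hF0 : F 0 = ⊤)
    (hFmono : ∀ n, F (n + 1) ≤ F n)
    (hFb : ∀ (i j : ℕ) (x y : V), x ∈ F i → y ∈ F j → b x y ∈ F (i + j - 1))
    -- the homological vector field, odd, vanishing to second order at *
    (dS : V) (hdS_odd : dS ∈ Gr 1) (hdS2 : dS ∈ F 2) (hdSdS : b dS dS = 0) :
    -- (1) well-definedness: the value of [V₁,[∂_S,V₂]] at * (i.e. mod F 1) depends
    -- only on the values of V₁, V₂ at * (i.e. on their classes mod F 1)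
    (∀ V₁ V₂ W₁ W₂ : V, W₁ - V₁ ∈ F 1 → W₂ - V₂ ∈ F 1 →
      b W₁ (b dS W₂) - b V₁ (b dS V₂) ∈ F 1) ∧
    -- (2) graded antisymmetry at * for the shifted (Π-reversed) parities
    (∀ (i j : ZMod 2) (V₁ V₂ : V), V₁ ∈ Gr i → V₂ ∈ Gr j →
      b V₁ (b dS V₂) + ((-1 : k) ^ (((i + 1) * (j + 1)).val)) • b V₂ (b dS V₁) ∈ F 1) ∧
    -- (3) graded Jacobi identity at *, a consequence of [∂_S,∂_S] = 0
    (∀ (i j : ZMod 2) (V₁ V₂ V₃ : V), V₁ ∈ Gr i → V₂ ∈ Gr j →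
      b V₁ (b dS (b V₂ (b dS V₃)))
        - b (b V₁ (b dS V₂)) (b dS V₃)
        - ((-1 : k) ^ (((i + 1) * (j + 1)).val)) • b V₂ (b dS (b V₁ (b dS V₃)))
        ∈ F 1) :=
  stmt4_general k V Gr b hb_gr hanti hjac F hF0 hFb dS hdS_odd hdS2 hdSdS
end

section
/- First obstruction identity: in the abstract Hodge setting, with Γ_{[1]} = Σ t^i e_i harmonic, the bracket [Γ_{[1]}, Γ_{[1]}] lies in ker ∂̄, and ∂̄(G∂̄*[Γ_{[1]},Γ_{[1]}]) = (1 - P)[Γ_{[1]},Γ_{[1]}]; consequently, setting Γ_{[2]} = -½G∂̄*[Γ_{[1]},Γ_{[1]}], one gets ∂̄(Γ_{[1]} + Γ_{[2]}) + ½[Γ_{[1]}+Γ_{[2]}, Γ_{[1]}+Γ_{[2]}] = ½P[Γ_{[1]},Γ_{[1]}] + (terms of order ≥ 3 in t). -/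
/-- Cauchy-product bracket on `g`-valued formal power series (coefficient families
indexed by monomials in the formal variables `t^i`). -/
noncomputable def cb {k : Type*} [Field k] {L : Type*} [AddCommGroup L] [Module k L]
    (b : L →ₗ[k] L →ₗ[k] L) {N : ℕ} (f g : (Fin N →₀ ℕ) → L) : (Fin N →₀ ℕ) → L :=
  fun m => ∑ p ∈ Finset.HasAntidiagonal.antidiagonal m, b (f p.1) (g p.2)

/-! `∂̄` is a derivation and `Γ₁` is closed, so `∂̄` kills `[Γ₁, Γ₁]`. For a closed `w` the
Hodge decomposition reads `w = P w + ∂̄ ∂̄* G w`, which is (2). In (3), by (2) the degree-two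
part is `∂̄ Γ₂ + ½[Γ₁, Γ₁] = ½ P[Γ₁, Γ₁]`; the remaining brackets involve `Γ₂`, which is
homogeneous of degree two, so they have degree at least three. -/

open Finsupp

section Families

variable {σ L : Type*}

def IsHomogeneousOfDegree [Zero L] (f : (σ →₀ ℕ) → L) (d : ℕ) : Prop :=
  ∀ m : σ →₀ ℕ, m.degree ≠ d → f m = 0

theorem IsHomogeneousOfDegree.comp {M : Type*} [Zero L] [Zero M] {f : (σ →₀ ℕ) → L} {d : ℕ}
    (hf : IsHomogeneousOfDegree f d) {φ : L → M} (hφ : φ 0 = 0) :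
    IsHomogeneousOfDegree (fun m => φ (f m)) d := fun m hm => by
  simp only [hf m hm, hφ]

variable [Fintype σ] [DecidableEq σ] [AddCommMonoid L]

/-- The coefficient family of the linear series `∑ i, t^i • e i`. -/
noncomputable def linearFamily (e : σ → L) : (σ →₀ ℕ) → L :=
  fun m => ∑ i, if m = Finsupp.single i 1 then e i else 0

theorem linearFamily_mem {S : Type*} [SetLike S L] [AddSubmonoidClass S L] {p : S}
    {e : σ → L} (he : ∀ i, e i ∈ p) (m : σ →₀ ℕ) : linearFamily e m ∈ p :=
  sum_mem fun i _ => by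
    split
    · exact he i
    · exact zero_mem p

theorem isHomogeneousOfDegree_linearFamily (e : σ → L) :
    IsHomogeneousOfDegree (linearFamily e) 1 := fun m hm =>
  Finset.sum_eq_zero fun i _ => if_neg fun h => hm (by rw [h, degree_single])

end Families

section CauchyBracket

variable {k L : Type*} [Field k] [AddCommGroup L] [Module k L] (b : L →ₗ[k] L →ₗ[k] L)
  {N : ℕ}

theorem cb_add_left (f₁ f₂ g : (Fin N →₀ ℕ) → L) :
    cb b (f₁ + f₂) g = cb b f₁ g + cb b f₂ g := by
  ext m
  simp only [cb, Pi.add_apply, map_add, LinearMap.add_apply, Finset.sum_add_distrib]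

theorem cb_add_right (f g₁ g₂ : (Fin N →₀ ℕ) → L) :
    cb b f (g₁ + g₂) = cb b f g₁ + cb b f g₂ := by
  ext m
  simp only [cb, Pi.add_apply, map_add, Finset.sum_add_distrib]

variable {b}

theorem IsHomogeneousOfDegree.cb {f g : (Fin N →₀ ℕ) → L} {d₁ d₂ : ℕ}
    (hf : IsHomogeneousOfDegree f d₁) (hg : IsHomogeneousOfDegree g d₂) :
    IsHomogeneousOfDegree (cb b f g) (d₁ + d₂) := fun m hm =>
  Finset.sum_eq_zero fun p hp => by
    rw [Finset.HasAntidiagonal.mem_antidiagonal] at hp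
    by_cases h₁ : p.1.degree = d₁
    · have h₂ : p.2.degree ≠ d₂ := fun h₂ => hm (by rw [← hp, map_add, h₁, h₂])
      rw [hg _ h₂, map_zero]
    · rw [hf _ h₁, map_zero, LinearMap.zero_apply]

theorem cb_mem_ker {D : L →ₗ[k] L} {p : Submodule k L} {s : k}
    (hD : ∀ x y, x ∈ p → D (b x y) = b (D x) y + s • b x (D y))
    {f g : (Fin N →₀ ℕ) → L} (hfp : ∀ m, f m ∈ p) (hf : ∀ m, D (f m) = 0)
    (hg : ∀ m, D (g m) = 0) (m : Fin N →₀ ℕ) : D (cb b f g m) = 0 := by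
  simp only [cb, map_sum, hD _ _ (hfp _), hf, hg, map_zero, LinearMap.zero_apply, smul_zero,
    add_zero, Finset.sum_const_zero]

end CauchyBracket

theorem map_green_adjoint_of_closed {k L : Type*} [Ring k] [AddCommGroup L] [Module k L]
    {db dbs G P : Module.End k L} (hHodge : (1 : Module.End k L) = P + (db * dbs + dbs * db) * G)
    (hGdb : G * db = db * G) (hGdbs : G * dbs = dbs * G) {w : L} (hw : db w = 0) :
    db (G (dbs w)) = w - P w := by
  have hdbG : db (G w) = 0 := by
    rw [← Module.End.mul_apply, ← hGdb, Module.End.mul_apply, hw, map_zero]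
  have hw' := congrArg (· w) hHodge
  simp only [Module.End.one_apply, LinearMap.add_apply, Module.End.mul_apply, hdbG, map_zero,
    add_zero] at hw'
  rw [← Module.End.mul_apply G, hGdbs, Module.End.mul_apply]
  exact eq_sub_of_add_eq' hw'.symm

theorem stmt16_general
    (k : Type*) [Field k]
    (L : Type*) [AddCommGroup L] [Module k L]
    -- dg Lie algebra structure with parity (the e_i are odd)
    (Gr : ZMod 2 → Submodule k L)
    (b : L →ₗ[k] L →ₗ[k] L)
    -- abstract Hodge package: ∂̄, ∂̄*, G, P with the usual identities
    (db dbs G P : Module.End k L)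
    (hleib : ∀ (i : ZMod 2) (x y : L), x ∈ Gr i →
      db (b x y) = b (db x) y + ((-1 : k) ^ i.val) • b x (db y))
    (hHodge : (1 : Module.End k L) = P + (db * dbs + dbs * db) * G)
    (hGdb : G * db = db * G) (hGdbs : G * dbs = dbs * G)
    -- harmonic elements e_i, formal variables t^i; Γ_[1] = Σ t^i e_i and
    -- Γ_[2] = -½ G∂̄*[Γ_[1],Γ_[1]] as coefficient families
    (N : ℕ) (e : Fin N → L)
    (he_db : ∀ i, db (e i) = 0)
    (he_odd : ∀ i, e i ∈ Gr 1)
    (Γ₁ Γ₂ : (Fin N →₀ ℕ) → L)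
    (hΓ₁ : Γ₁ = fun m => ∑ i, if m = Finsupp.single i 1 then e i else 0)
    (hΓ₂ : Γ₂ = fun m => -((2⁻¹ : k) • G (dbs (cb b Γ₁ Γ₁ m)))) :
    -- (1) [Γ_[1],Γ_[1]] is ∂̄-closed (since ∂̄ is a derivation of the bracket)
    (∀ m, db (cb b Γ₁ Γ₁ m) = 0) ∧
    -- (2) ∂̄(G∂̄*[Γ_[1],Γ_[1]]) = (1 - P)[Γ_[1],Γ_[1]]
    (∀ m, db (G (dbs (cb b Γ₁ Γ₁ m))) = cb b Γ₁ Γ₁ m - P (cb b Γ₁ Γ₁ m)) ∧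
    -- (3) ∂̄(Γ_[1]+Γ_[2]) + ½[Γ_[1]+Γ_[2],Γ_[1]+Γ_[2]] = ½P[Γ_[1],Γ_[1]] + (order ≥ 3)
    (∃ ρ : (Fin N →₀ ℕ) → L,
      (∀ m : Fin N →₀ ℕ, (m.sum fun _ e => e) ≤ 2 → ρ m = 0) ∧
      (∀ m, db (Γ₁ m + Γ₂ m)
          + (2⁻¹ : k) • cb b (fun m' => Γ₁ m' + Γ₂ m') (fun m' => Γ₁ m' + Γ₂ m') m
        = (2⁻¹ : k) • P (cb b Γ₁ Γ₁ m) + ρ m)) := by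
  obtain rfl : Γ₁ = linearFamily e := hΓ₁
  have hΓ₁_closed : ∀ m, db (linearFamily e m) = 0 :=
    linearFamily_mem (p := LinearMap.ker db) he_db
  have hclosed : ∀ m, db (cb b (linearFamily e) (linearFamily e) m) = 0 :=
    cb_mem_ker (hleib 1) (linearFamily_mem he_odd) hΓ₁_closed hΓ₁_closed
  have hexact m := map_green_adjoint_of_closed hHodge hGdb hGdbs (hclosed m)
  have hΓ₁_deg := isHomogeneousOfDegree_linearFamily e
  have hΓ₂_deg : IsHomogeneousOfDegree Γ₂ 2 :=
    hΓ₂ ▸ (hΓ₁_deg.cb hΓ₁_deg).comp (φ := fun x => -((2⁻¹ : k) • G (dbs x))) (by simp)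
  refine ⟨hclosed, hexact, fun m => (2⁻¹ : k) • (cb b (linearFamily e) Γ₂ m
    + cb b Γ₂ (linearFamily e) m + cb b Γ₂ Γ₂ m), fun m hm => ?_, fun m => ?_⟩
  · change m.degree ≤ 2 at hm
    dsimp only
    rw [(hΓ₁_deg.cb hΓ₂_deg) m (by omega), (hΓ₂_deg.cb hΓ₁_deg) m (by omega),
      (hΓ₂_deg.cb hΓ₂_deg) m (by omega), add_zero, add_zero, smul_zero]
  · change db (linearFamily e m + Γ₂ m) + (2⁻¹ : k) • cb b (linearFamily e + Γ₂)
      (linearFamily e + Γ₂) m = _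
    simp only [cb_add_left, cb_add_right, Pi.add_apply, map_add, hΓ₁_closed, hΓ₂, map_neg,
      map_smul, hexact]
    module

/-- first obstruction identity. In the abstract Hodge setting, with
`Γ_[1] = Σ t^i e_i` harmonic: `[Γ_[1],Γ_[1]] ∈ ker ∂̄`;
`∂̄(G∂̄*[Γ_[1],Γ_[1]]) = (1-P)[Γ_[1],Γ_[1]]`; and consequently, setting
`Γ_[2] = -½G∂̄*[Γ_[1],Γ_[1]]`, one has
`∂̄(Γ_[1]+Γ_[2]) + ½[Γ_[1]+Γ_[2], Γ_[1]+Γ_[2]] = ½P[Γ_[1],Γ_[1]] + O(t³)`. -/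
theorem stmt16
    (k : Type*) [Field k] [CharZero k]
    (L : Type*) [AddCommGroup L] [Module k L]
    -- dg Lie algebra structure with parity (the e_i are odd)
    (Gr : ZMod 2 → Submodule k L)
    (b : L →ₗ[k] L →ₗ[k] L)
    (hb_gr : ∀ (i j : ZMod 2) (x y : L), x ∈ Gr i → y ∈ Gr j → b x y ∈ Gr (i + j))
    (hanti : ∀ (i j : ZMod 2) (x y : L), x ∈ Gr i → y ∈ Gr j →
      b x y = -(((-1 : k) ^ ((i * j).val)) • b y x))
    (hjac : ∀ (i j : ZMod 2) (x y z : L), x ∈ Gr i → y ∈ Gr j →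
      b x (b y z) = b (b x y) z + ((-1 : k) ^ ((i * j).val)) • b y (b x z))
    -- abstract Hodge package: ∂̄, ∂̄*, G, P with the usual identities
    (db dbs G P : Module.End k L)
    (hdb2 : db * db = 0) (hdbs2 : dbs * dbs = 0)
    (hleib : ∀ (i : ZMod 2) (x y : L), x ∈ Gr i →
      db (b x y) = b (db x) y + ((-1 : k) ^ i.val) • b x (db y))
    (hHodge : (1 : Module.End k L) = P + (db * dbs + dbs * db) * G)
    (hGdb : G * db = db * G) (hGdbs : G * dbs = dbs * G)
    (hPdb : P * db = 0) (hdbP : db * P = 0)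
    (hPdbs : P * dbs = 0) (hdbsP : dbs * P = 0)
    -- harmonic elements e_i, formal variables t^i; Γ_[1] = Σ t^i e_i and
    -- Γ_[2] = -½ G∂̄*[Γ_[1],Γ_[1]] as coefficient families
    (N : ℕ) (e : Fin N → L)
    (he_db : ∀ i, db (e i) = 0) (he_dbs : ∀ i, dbs (e i) = 0)
    (he_P : ∀ i, P (e i) = e i) (he_odd : ∀ i, e i ∈ Gr 1)
    (Γ₁ Γ₂ : (Fin N →₀ ℕ) → L)
    (hΓ₁ : Γ₁ = fun m => ∑ i, if m = Finsupp.single i 1 then e i else 0)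
    (hΓ₂ : Γ₂ = fun m => -((2⁻¹ : k) • G (dbs (cb b Γ₁ Γ₁ m)))) :
    -- (1) [Γ_[1],Γ_[1]] is ∂̄-closed (since ∂̄ is a derivation of the bracket)
    (∀ m, db (cb b Γ₁ Γ₁ m) = 0) ∧
    -- (2) ∂̄(G∂̄*[Γ_[1],Γ_[1]]) = (1 - P)[Γ_[1],Γ_[1]]
    (∀ m, db (G (dbs (cb b Γ₁ Γ₁ m))) = cb b Γ₁ Γ₁ m - P (cb b Γ₁ Γ₁ m)) ∧
    -- (3) ∂̄(Γ_[1]+Γ_[2]) + ½[Γ_[1]+Γ_[2],Γ_[1]+Γ_[2]] = ½P[Γ_[1],Γ_[1]] + (order ≥ 3)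
    (∃ ρ : (Fin N →₀ ℕ) → L,
      (∀ m : Fin N →₀ ℕ, (m.sum fun _ e => e) ≤ 2 → ρ m = 0) ∧
      (∀ m, db (Γ₁ m + Γ₂ m)
          + (2⁻¹ : k) • cb b (fun m' => Γ₁ m' + Γ₂ m') (fun m' => Γ₁ m' + Γ₂ m') m
        = (2⁻¹ : k) • P (cb b Γ₁ Γ₁ m) + ρ m)) :=
  stmt16_general k L Gr b db dbs G P hleib hHodge hGdb hGdbs N e he_db he_odd Γ₁ Γ₂ hΓ₁ hΓ₂
end
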